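/- arXiv:2410.14460 — 2 statements merged into one kernel-verified Lean document; each statement's English description precedes it below -/
import Mathlib

section
/- For every Set functor F, the identity relational connector id_F is a symmetric lax extension of F: it is transitive (id_F · id_F ≤ id_F), it extends F (Δ_{FX} ⊆ id_F Δ_X for all X), and it is symmetric ((id_F)° = id_F). -/
open CategoryTheory

universe u

/-- A `Set` functor: a functor from the category of sets (types) to itself. -/
abbrev SetFunctor : Type (u + 1) := CategoryTheory.Functor (Type u) (Type u)

/-- Applicative-order composition of relations: `(rcomp s r) x z ↔ ∃ y, r x y ∧ s y z`,
i.e. `s · r` in the notation of the paper. -/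
def rcomp {X Y Z : Type u} (s : Y → Z → Prop) (r : X → Y → Prop) : X → Z → Prop :=
  fun x z => ∃ y, r x y ∧ s y z

/-- Relational converse `r°`. -/
def rconv {X Y : Type u} (r : X → Y → Prop) : Y → X → Prop := fun y x => r x y

/-- The graph of a function, identifying functions with relations. -/
def graph {X Y : Type u} (f : X → Y) : X → Y → Prop := fun x y => f x = y

/-- The diagonal relation `Δ_X`. -/
def diag (X : Type u) : X → X → Prop := fun x y => x = y

/-- Relational image `r[A]`. -/
def rimage {X Y : Type u} (r : X → Y → Prop) (A : Set X) : Set Y :=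
  {y | ∃ x ∈ A, r x y}

/-- The pointwise product of two `Set` functors. -/
def prodFunctor (F₁ F₂ : SetFunctor.{u}) : SetFunctor.{u} where
  obj X := F₁.obj X × F₂.obj X
  map f := TypeCat.ofHom fun p => (F₁.map f p.1, F₂.map f p.2)
  map_id X := by ext p <;> simp
  map_comp f g := by ext p <;> simp

/-- An assignment of relations `F X ⇸ G Y` to relations `X ⇸ Y`; a relational connector
is such an assignment satisfying monotonicity and naturality (`RelConn.IsConnector`). -/
structure RelConn (F G : SetFunctor.{u}) : Type (u + 1) where
  rel : ∀ {X Y : Type u}, (X → Y → Prop) → F.obj X → G.obj Y → Prop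

namespace RelConn

variable {F G H V : SetFunctor.{u}}

/-- Monotonicity: `r₁ ⊆ r₂` implies `L r₁ ⊆ L r₂`. -/
def Mono (L : RelConn F G) : Prop :=
  ∀ (X Y : Type u) (r₁ r₂ : X → Y → Prop), (∀ x y, r₁ x y → r₂ x y) →
    ∀ a b, L.rel r₁ a b → L.rel r₂ a b

/-- Naturality: `L(g° · r · f) = (G g)° · L r · F f`. -/
def Natural (L : RelConn F G) : Prop :=
  ∀ (X X' Y Y' : Type u) (f : X' → X) (g : Y' → Y) (r : X → Y → Prop),
    L.rel (rcomp (rconv (graph g)) (rcomp r (graph f))) =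
      rcomp (rconv (graph (G.map (TypeCat.ofHom g)))) (rcomp (L.rel r) (graph (F.map (TypeCat.ofHom f))))

/-- A relational connector: a monotone and natural assignment of relations. -/
def IsConnector (L : RelConn F G) : Prop := L.Mono ∧ L.Natural

/-- The pointwise order on connectors: `L ≤ K` iff `L r ⊆ K r` for all `r`. -/
def le (L K : RelConn F G) : Prop :=
  ∀ (X Y : Type u) (r : X → Y → Prop) (a : F.obj X) (b : G.obj Y), L.rel r a b → K.rel r a b

/-- The composite `L · K` of relational connectors:
`(L · K) r = ⋃ { L s · K t | s · t = r }`, the join over all factorizations of `r`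
through an arbitrary intermediate set `Y`. -/
def comp (L : RelConn G H) (K : RelConn F G) : RelConn F H where
  rel := fun {X Z} r a c => ∃ (Y : Type u) (t : X → Y → Prop) (s : Y → Z → Prop),
    rcomp s t = r ∧ ∃ b, K.rel t a b ∧ L.rel s b c

/-- The converse `L°` of a connector: `L° r = (L (r°))°`. -/
def conv (L : RelConn F G) : RelConn G F where
  rel := fun {X Y} r b a => L.rel (rconv r) a b

/-- The meet (pointwise intersection) of two connectors. -/
def meet (L K : RelConn F G) : RelConn F G where
  rel := fun {X Y} r a b => L.rel r a b ∧ K.rel r a b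

/-- The product `L₁ × L₂` of connectors. -/
def prod {F₁ F₂ G₁ G₂ : SetFunctor.{u}} (L₁ : RelConn F₁ G₁) (L₂ : RelConn F₂ G₂) :
    RelConn (prodFunctor F₁ F₂) (prodFunctor G₁ G₂) where
  rel := fun {X Y} r p q => L₁.rel r p.1 q.1 ∧ L₂.rel r p.2 q.2

/-- The identity relational connector `id_F`: `b (id_F r) c` iff for all set functors `G`,
all relational connectors `L : G → F`, all `s : Z ⇸ X` and `a ∈ G Z`,
`a (L s) b` implies `a (L (r · s)) c`. -/
def id (F : SetFunctor.{u}) : RelConn F F where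
  rel := fun {X Y} r b c =>
    ∀ (G : SetFunctor.{u}) (L : RelConn G F), L.IsConnector →
      ∀ (Z : Type u) (s : Z → X → Prop) (a : G.obj Z),
        L.rel s a b → L.rel (rcomp r s) a c

/-- A connector `L : F → F` is transitive if `L · L ≤ L`. -/
def Transitive (L : RelConn F F) : Prop := (L.comp L).le L

/-- A connector `L : F → F` is symmetric if `L° ≤ L`. -/
def Symmetric (L : RelConn F F) : Prop := L.conv.le L

/-- A connector `L : F → F` extends `F` if `Δ_{F X} ⊆ L Δ_X` for all `X`. -/
def ExtendsF (L : RelConn F F) : Prop :=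
  ∀ (X : Type u) (a b : F.obj X), diag (F.obj X) a b → L.rel (diag X) a b

/-- Condition (L2) of lax extensions: `L s · L r ⊆ L (s · r)`. -/
def LaxL2 (L : RelConn F F) : Prop :=
  ∀ (X Y Z : Type u) (r : X → Y → Prop) (s : Y → Z → Prop) (a : F.obj X) (c : F.obj Z),
    rcomp (L.rel s) (L.rel r) a c → L.rel (rcomp s r) a c

/-- Condition (L3) of lax extensions: `F f ⊆ L f` and `(F f)° ⊆ L (f°)`. -/
def LaxL3 (L : RelConn F F) : Prop :=
  ∀ (X Y : Type u) (f : X → Y),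
    (∀ a b, graph (F.map (TypeCat.ofHom f)) a b → L.rel (graph f) a b) ∧
    (∀ b a, rconv (graph (F.map (TypeCat.ofHom f))) b a → L.rel (rconv (graph f)) b a)

/-- A lax extension of `F`: an assignment of relations satisfying (L1) monotonicity,
(L2) and (L3). -/
def IsLaxExtension (L : RelConn F F) : Prop := L.Mono ∧ L.LaxL2 ∧ L.LaxL3

/-- A connector `L : F → G` extends a natural transformation `α : F ⇒ G` if the graph of
`α_X` is contained in `L Δ_X` for all sets `X`. -/
def Extends (L : RelConn F G) (α : F ⟶ G) : Prop :=
  ∀ (X : Type u) (a : F.obj X) (b : G.obj X), graph (α.app X) a b → L.rel (diag X) a b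

end RelConn

/-- The connector `id_G • α` obtained from a natural transformation `α : F ⇒ G`:
`(id_G • α) r = (id_G r) · α_X`. -/
def idBullet {F G : SetFunctor.{u}} (α : F ⟶ G) : RelConn F G where
  rel := fun {X Y} r => rcomp ((RelConn.id G).rel r) (graph (α.app X))

/-- The intermediate set of the couniversal factorization of `r : X ⇸ Z`:
`{(A,B) ∈ P(X) × P(Z) | A × B ⊆ r}`. -/
def CoInt {X Z : Type u} (r : X → Z → Prop) : Type u :=
  {p : Set X × Set Z // ∀ x ∈ p.1, ∀ z ∈ p.2, r x z}

/-- The first leg `t = {(x,(A,B)) | x ∈ A}` of the couniversal factorization. -/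
def coT {X Z : Type u} (r : X → Z → Prop) : X → CoInt r → Prop := fun x p => x ∈ p.1.1

/-- The second leg `s = {((A,B),z) | z ∈ B}` of the couniversal factorization. -/
def coS {X Z : Type u} (r : X → Z → Prop) : CoInt r → Z → Prop := fun p z => z ∈ p.1.2

/-- `f : (C,γ) → (D,δ)` is a morphism of `F`-coalgebras: `F f ∘ γ = δ ∘ f`. -/
def IsCoalgMor {F : SetFunctor.{u}} {C D : Type u} (γ : C → F.obj C) (δ : D → F.obj D)
    (f : C → D) : Prop := ∀ x, F.map (TypeCat.ofHom f) (γ x) = δ (f x)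

/-- `r : C ⇸ D` is an `L`-simulation between the `F`-coalgebra `(C,γ)` and the
`G`-coalgebra `(D,δ)`: `x r y` implies `γ x (L r) δ y`. -/
def IsSim {F G : SetFunctor.{u}} (L : RelConn F G) {C D : Type u}
    (γ : C → F.obj C) (δ : D → G.obj D) (r : C → D → Prop) : Prop :=
  ∀ x y, r x y → L.rel r (γ x) (δ y)

/-- `L`-similarity: `x ≼_L y` iff some `L`-simulation relates `x` to `y`. -/
def LSimilar {F G : SetFunctor.{u}} (L : RelConn F G) {C D : Type u}
    (γ : C → F.obj C) (δ : D → G.obj D) : C → D → Prop :=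
  fun x y => ∃ r, IsSim L γ δ r ∧ r x y

/-- `r : C ⇸ D` is an `L`-bisimulation (for `L : F → F`): both `r` and `r°`
are `L`-simulations. -/
def IsBisim {F : SetFunctor.{u}} (L : RelConn F F) {C D : Type u}
    (γ : C → F.obj C) (δ : D → F.obj D) (r : C → D → Prop) : Prop :=
  IsSim L γ δ r ∧ IsSim L δ γ (rconv r)

/-- `L`-bisimilarity: `x ≃_L y` iff some `L`-bisimulation relates `x` to `y`. -/
def Bisimilar {F : SetFunctor.{u}} (L : RelConn F F) {C D : Type u}
    (γ : C → F.obj C) (δ : D → F.obj D) : C → D → Prop :=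
  fun x y => ∃ r, IsBisim L γ δ r ∧ r x y

/-- Heterogeneous `L`-bisimulation for `L : F → G`: `r` is an `L`-simulation and `r°`
is an `L°`-simulation. -/
def IsBisimHet {F G : SetFunctor.{u}} (L : RelConn F G) {C D : Type u}
    (γ : C → F.obj C) (δ : D → G.obj D) (r : C → D → Prop) : Prop :=
  IsSim L γ δ r ∧ IsSim L.conv δ γ (rconv r)

/-- Heterogeneous `L`-bisimilarity for `L : F → G`. -/
def BisimilarHet {F G : SetFunctor.{u}} (L : RelConn F G) {C D : Type u}
    (γ : C → F.obj C) (δ : D → G.obj D) : C → D → Prop :=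
  fun x y => ∃ r, IsBisimHet L γ δ r ∧ r x y

/-- An `n`-ary predicate lifting for a `Set` functor `F`: a natural transformation
`(2^(-))ⁿ ⇒ 2^(F -)` with the contravariant powerset functor. -/
structure PredLifting (F : SetFunctor.{u}) (n : ℕ) : Type (u + 1) where
  app : ∀ (X : Type u), (Fin n → Set X) → Set (F.obj X)
  natural : ∀ (X Y : Type u) (f : X → Y) (A : Fin n → Set Y) (a : F.obj X),
    F.map (TypeCat.ofHom f) a ∈ app Y A ↔ a ∈ app X (fun i => f ⁻¹' (A i))

/-- Monotonicity of a predicate lifting. -/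
def PredLifting.IsMonotone {F : SetFunctor.{u}} {n : ℕ} (lam : PredLifting F n) : Prop :=
  ∀ (X : Type u) (A B : Fin n → Set X), (∀ i, A i ⊆ B i) → lam.app X A ⊆ lam.app X B

/-- The dual predicate lifting `λ̄_X(A₁,…,Aₙ) = F X \ λ_X(X\A₁,…,X\Aₙ)`. -/
def PredLifting.dual {F : SetFunctor.{u}} {n : ℕ} (lam : PredLifting F n) :
    PredLifting F n where
  app X A := (lam.app X fun i => (A i)ᶜ)ᶜ
  natural := by
    intro X Y f A a
    simp only [Set.mem_compl_iff, lam.natural, Set.preimage_compl]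

/-- The Kantorovich connector `L_Λ` induced by an arity-preserving relation `Λ` between
monotone predicate liftings of `F` and of `G`: `a (L_Λ r) b` iff for every `n`-ary pair
`(λ,μ) ∈ Λ` and all `A₁,…,Aₙ ⊆ X`, `a ∈ λ_X(A₁,…,Aₙ)` implies `b ∈ μ_Y(r[A₁],…,r[Aₙ])`. -/
def kantorovich {F G : SetFunctor.{u}}
    (Λ : ∀ n : ℕ, PredLifting F n → PredLifting G n → Prop) : RelConn F G where
  rel := fun {X Y} r a b =>
    ∀ (n : ℕ) (lam : PredLifting F n) (mu : PredLifting G n), Λ n lam mu →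
      ∀ A : Fin n → Set X, a ∈ lam.app X A → b ∈ mu.app Y (fun i => rimage r (A i))

/-!
Transitivity and extension are read off the definition of `id_F` directly: its defining
property is stable under composing the tested relations, and trivial for `r = Δ`. Symmetry is
the real point: `id_F` is itself a connector (its naturality is inherited from that of the
test connectors `L`), hence so is `id_F°`, which may therefore serve as a test connector in
the definition of `id_F`. Given `c (id_F r°) b`, testing with `L = id_F°`, `s = Δ` and
`a = c` (legitimate since `c (id_F° Δ) c`, as `id_F` extends `F`) yields `c (id_F° r°) b`,
i.e. `b (id_F r) c`.
-/

section Relations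

variable {X Y Z W : Type u}

lemma rcomp_assoc (v : Z → W → Prop) (s : Y → Z → Prop) (t : X → Y → Prop) :
    rcomp v (rcomp s t) = rcomp (rcomp v s) t := by
  funext x w
  simp only [rcomp, eq_iff_iff]
  constructor
  · rintro ⟨z, ⟨y, hty, hsy⟩, hvz⟩; exact ⟨y, hty, z, hsy, hvz⟩
  · rintro ⟨y, hty, z, hsy, hvz⟩; exact ⟨z, ⟨y, hty, hsy⟩, hvz⟩

lemma rcomp_mono {s₁ s₂ : Y → Z → Prop} {t₁ t₂ : X → Y → Prop}
    (hs : ∀ y z, s₁ y z → s₂ y z) (ht : ∀ x y, t₁ x y → t₂ x y) (x : X) (z : Z) :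
    rcomp s₁ t₁ x z → rcomp s₂ t₂ x z := by
  rintro ⟨y, hxy, hyz⟩
  exact ⟨y, ht x y hxy, hs y z hyz⟩

@[simp]
lemma rcomp_diag (r : X → Y → Prop) : rcomp r (diag X) = r := by
  funext x y
  simp [rcomp, diag]

@[simp]
lemma diag_rcomp (r : X → Y → Prop) : rcomp (diag Y) r = r := by
  funext x y
  simp [rcomp, diag]

@[simp]
lemma rcomp_graph_id (r : X → Y → Prop) : rcomp r (graph (fun x : X => x)) = r := by
  funext x y
  simp [rcomp, graph]

@[simp]
lemma rconv_diag : rconv (diag X) = diag X := by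
  funext x y
  simp only [rconv, diag, eq_iff_iff]
  exact eq_comm

lemma rcomp_rconv_graph_rcomp_graph_iff {X' Y' : Type u} (r : X → Y → Prop) (f : X' → X)
    (g : Y' → Y) (x : X') (y : Y') :
    rcomp (rconv (graph g)) (rcomp r (graph f)) x y ↔ r (f x) (g y) := by
  simp only [rcomp, rconv, graph]
  constructor
  · rintro ⟨_, ⟨_, rfl, h⟩, rfl⟩; exact h
  · intro h; exact ⟨g y, ⟨f x, rfl, h⟩, rfl⟩

lemma rconv_rcomp_rconv_graph_rcomp_graph {X' Y' : Type u} (r : X → Y → Prop) (f : X' → X)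
    (g : Y' → Y) :
    rconv (rcomp (rconv (graph g)) (rcomp r (graph f))) =
      rcomp (rconv (graph f)) (rcomp (rconv r) (graph g)) := by
  funext y x
  simp only [rcomp_rconv_graph_rcomp_graph_iff, rconv]

end Relations

namespace RelConn

variable {F G : SetFunctor.{u}}

lemma le_antisymm {L K : RelConn F G} (hLK : L.le K) (hKL : K.le L) : L = K := by
  obtain ⟨l⟩ := L
  obtain ⟨k⟩ := K
  congr 1
  funext X Y r a b
  exact propext ⟨hLK X Y r a b, hKL X Y r a b⟩

lemma Symmetric.conv_eq {L : RelConn F F} (hL : L.Symmetric) : L.conv = L :=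
  le_antisymm hL fun X Y r a b hab => hL Y X (rconv r) b a hab

section Connector

variable {L : RelConn F G}

lemma Natural.rel_iff (hL : L.Natural) {X X' Y Y' : Type u} (f : X' → X) (g : Y' → Y)
    (r : X → Y → Prop) (a : F.obj X') (b : G.obj Y') :
    L.rel (rcomp (rconv (graph g)) (rcomp r (graph f))) a b ↔
      L.rel r (F.map (TypeCat.ofHom f) a) (G.map (TypeCat.ofHom g) b) := by
  rw [hL, rcomp_rconv_graph_rcomp_graph_iff]

lemma Natural.rel_rcomp_rconv_graph_iff (hL : L.Natural) {X Y Y' : Type u}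
    (r : X → Y → Prop) (g : Y' → Y) (a : F.obj X) (b : G.obj Y') :
    L.rel (rcomp (rconv (graph g)) r) a b ↔ L.rel r a (G.map (TypeCat.ofHom g) b) := by
  have h := hL.rel_iff (fun x => x) g r a b
  have hid : F.map (TypeCat.ofHom fun x : X => x) a = a := F.map_id_apply X a
  rwa [rcomp_graph_id, hid] at h

lemma IsConnector.rel_rcomp_graph (hL : L.IsConnector) {X Y Y' : Type u}
    (r : X → Y → Prop) (g : Y → Y') {a : F.obj X} {b : G.obj Y} (hab : L.rel r a b) :
    L.rel (rcomp (graph g) r) a (G.map (TypeCat.ofHom g) b) := by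
  rw [← hL.2.rel_rcomp_rconv_graph_iff]
  exact hL.1 _ _ r _ (fun x y hxy => ⟨g y, ⟨y, hxy, rfl⟩, rfl⟩) a b hab

lemma IsConnector.conv (hL : L.IsConnector) : L.conv.IsConnector := by
  refine ⟨fun X Y r₁ r₂ hr b a => hL.1 Y X (rconv r₁) (rconv r₂) (fun y x => hr x y) a b, ?_⟩
  intro X X' Y Y' f g r
  funext b a
  show L.rel (rconv _) a b = _
  rw [rconv_rcomp_rconv_graph_rcomp_graph, hL.2.rel_iff,
    rcomp_rconv_graph_rcomp_graph_iff]
  rfl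

end Connector

lemma id_mono : (id F).Mono := by
  intro X Y r₁ r₂ hr b c h G L hL Z s a hs
  exact hL.1 _ _ _ _ (rcomp_mono hr fun _ _ => _root_.id) a c (h G L hL Z s a hs)

lemma id_extendsF : (id F).ExtendsF := by
  rintro X b _ rfl G L hL Z s a hs
  rwa [diag_rcomp]

lemma id_laxL2 : (id F).LaxL2 := by
  rintro X Y Z r s a c ⟨b, hab, hbc⟩ G L hL W t a₀ ht
  rw [← rcomp_assoc]
  exact hbc G L hL W (rcomp r t) a₀ (hab G L hL W t a₀ ht)

lemma id_transitive : (id F).Transitive := by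
  rintro X Z r a c ⟨Y, t, s, rfl, b, hab, hbc⟩
  exact id_laxL2 X Y Z t s a c ⟨b, hab, hbc⟩

lemma id_natural : (id F).Natural := by
  intro X X' Y Y' f g r
  funext b c
  rw [eq_iff_iff, rcomp_rconv_graph_rcomp_graph_iff]
  -- The two directions transport the test relation `s` along `f°` and `f` respectively.
  constructor
  · intro H G L hL Z s a hs
    have hfs := H G L hL Z _ a ((hL.2.rel_rcomp_rconv_graph_iff s f a b).mpr hs)
    refine (hL.2.rel_rcomp_rconv_graph_iff (rcomp r s) g a c).mp (hL.1 _ _ _ _ ?_ a c hfs)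
    rintro z y' ⟨_, ⟨x, hsx, rfl⟩, _, ⟨_, rfl, hrx⟩, rfl⟩
    exact ⟨g y', ⟨f _, hsx, hrx⟩, rfl⟩
  · intro H G L hL Z s a hs
    have hfs := H G L hL Z _ a (hL.rel_rcomp_graph s f hs)
    refine hL.1 _ _ _ _ ?_ a c ((hL.2.rel_rcomp_rconv_graph_iff _ g a c).mpr hfs)
    rintro z y' ⟨y, ⟨x, ⟨x', hsx', hfx'⟩, hrxy⟩, hgy⟩
    exact ⟨x', hsx', y, ⟨x, hfx', hrxy⟩, hgy⟩

lemma id_isConnector : (id F).IsConnector := ⟨id_mono, id_natural⟩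

lemma id_symmetric : (id F).Symmetric := by
  intro X Y r b c hcb
  have hcc : (id F).conv.rel (diag Y) c c := by
    show (id F).rel (rconv (diag Y)) c c
    rw [rconv_diag]
    exact id_extendsF Y c c rfl
  have h := hcb F (id F).conv id_isConnector.conv Y (diag Y) c hcc
  rw [rcomp_diag] at h
  exact h

end RelConn

/-- the identity relational connector `id_F` is a symmetric lax extension
of `F`: it is transitive, extends `F`, and is symmetric (`(id_F)° = id_F`). -/
theorem id_symmetric_lax_extension (F : SetFunctor.{u}) :
    (RelConn.id F).Transitive ∧ (RelConn.id F).ExtendsF ∧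
      (RelConn.id F).conv = RelConn.id F :=
  ⟨RelConn.id_transitive, RelConn.id_extendsF, RelConn.id_symmetric.conv_eq⟩
end

section
/- Let L : F → G be a relational connector between Set functors, let r : C ⇸ D be an L-simulation between an F-coalgebra (C,γ) and a G-coalgebra (D,δ), and let f : (C',γ') → (C,γ) and g : (C,γ) → (C'',γ'') be F-coalgebra morphisms. Then r · f : C' ⇸ D and r · g° : C'' ⇸ D are L-simulations. -/
open CategoryTheory

universe u

/-! Precomposing with a coalgebra morphism `f` is naturality of `L` in its domain argument,
`L(r · f) = L r · F f`. For the converse of a morphism `g` one first enlarges `r` to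
`(r · g°) · g` by monotonicity and then strips off `g` by naturality. -/

theorem rcomp_graph_iff {X Y Z : Type u} (s : Y → Z → Prop) (f : X → Y) (x : X) (z : Z) :
    rcomp s (graph f) x z ↔ s (f x) z :=
  ⟨fun ⟨_, hxy, hs⟩ => hxy ▸ hs, fun hs => ⟨f x, rfl, hs⟩⟩

theorem rcomp_rconv_graph_id {X Y : Type u} (t : X → Y → Prop) :
    rcomp (rconv (graph (id : Y → Y))) t = t := by
  funext x y
  exact propext ⟨fun ⟨_, ht, rfl⟩ => ht, fun ht => ⟨y, ht, rfl⟩⟩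

theorem rel_le_rcomp_rcomp_rconv_graph_graph {X Y Z : Type u} (r : X → Z → Prop) (g : X → Y)
    (x : X) (z : Z) (h : r x z) : rcomp (rcomp r (rconv (graph g))) (graph g) x z :=
  ⟨g x, rfl, x, rfl, h⟩

theorem RelConn.Natural.rel_rcomp_graph {F G : SetFunctor.{u}} {L : RelConn F G}
    (hN : L.Natural) {X X' Y : Type u} (f : X' → X) (s : X → Y → Prop) (a : F.obj X')
    (b : G.obj Y) : L.rel (rcomp s (graph f)) a b ↔ L.rel s (F.map (TypeCat.ofHom f) a) b := by
  have h := hN X X' Y Y f _root_.id s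
  rw [rcomp_rconv_graph_id, show TypeCat.ofHom (_root_.id : Y → Y) = 𝟙 Y from rfl, G.map_id] at h
  rw [h]
  exact (iff_of_eq (congrFun₂ (rcomp_rconv_graph_id _) a b)).trans (rcomp_graph_iff _ _ _ _)

namespace IsSim

variable {F G : SetFunctor.{u}} {L : RelConn F G} {C C' C'' D : Type u}
  {γ : C → F.obj C} {γ' : C' → F.obj C'} {γ'' : C'' → F.obj C''} {δ : D → G.obj D}
  {r : C → D → Prop}

theorem rcomp_graph (hN : L.Natural) (hr : IsSim L γ δ r) {f : C' → C}
    (hf : IsCoalgMor γ' γ f) : IsSim L γ' δ (rcomp r (graph f)) := by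
  rintro x y ⟨_, rfl, hxy⟩
  rw [hN.rel_rcomp_graph, hf]
  exact hr _ _ hxy

theorem rcomp_rconv_graph (hM : L.Mono) (hN : L.Natural) (hr : IsSim L γ δ r) {g : C → C''}
    (hg : IsCoalgMor γ γ'' g) : IsSim L γ'' δ (rcomp r (rconv (graph g))) := by
  rintro _ y ⟨x, rfl, hxy⟩
  have h := hM _ _ r _ (rel_le_rcomp_rcomp_rconv_graph_graph r g) _ _ (hr x y hxy)
  rwa [hN.rel_rcomp_graph, hg] at h

end IsSim

/-- if `r : C ⇸ D` is an `L`-simulation and `f : (C',γ') → (C,γ)`,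
`g : (C,γ) → (C'',γ'')` are `F`-coalgebra morphisms, then `r · f` and `r · g°`
are `L`-simulations. -/
theorem sim_comp_morphism (F G : SetFunctor.{u}) (L : RelConn F G) (hL : L.IsConnector)
    (C C' C'' D : Type u)
    (γ : C → F.obj C) (γ' : C' → F.obj C') (γ'' : C'' → F.obj C'') (δ : D → G.obj D)
    (r : C → D → Prop) (hr : IsSim L γ δ r)
    (f : C' → C) (hf : IsCoalgMor γ' γ f)
    (g : C → C'') (hg : IsCoalgMor γ γ'' g) :
    IsSim L γ' δ (rcomp r (graph f)) ∧ IsSim L γ'' δ (rcomp r (rconv (graph g))) :=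
  ⟨hr.rcomp_graph hL.2 hf, hr.rcomp_rconv_graph hL.1 hL.2 hg⟩
end
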